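/- arXiv:2206.02774 — 2 statements merged into one kernel-verified Lean document; each statement's English description precedes it below -/
import Mathlib

section
/- Let G : P(ℝ^d) → ℝ be convex with a normalized flat derivative, minimized by an absolutely continuous measure m*, and suppose there exists λ > 0 such that G(m') − G(m*) ≥ λ·χ²(m*|m') for all m'. Then for any absolutely continuous probability measure m, G(m) − G(m*) ≤ (1/λ)·‖(δG/δm)(m,·)‖²_{L²(m)}. -/
open MeasureTheory Set

/-- A probability density on ℝ^d with respect to Lebesgue measure. -/
def IsProbDensity {d : ℕ} (p : (Fin d → ℝ) → ℝ) : Prop :=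
  Measurable p ∧ (∀ x, 0 ≤ p x) ∧ ∫ x, p x = 1

/-!
Convexity and normalization give `G m - G m* ≤ -∫ DG m · m* = -∫ DG m · (m*/m - 1) · m`, and
AM–GM bounds this by `‖DG m‖²/(2λ) + (λ/2) χ²(m* | m) ≤ ‖DG m‖²/(2λ) + (G m - G m*)/2`.
The middle identity needs `m* = 0` a.e. on `{m = 0}`. The mixtures `q_t = (1 - t) m* + t m`
satisfy `G q_t ≤ G m`, while `χ²(m* | q_t) ≥ t²/(1 - t) · m*{m = 0}`; so quadratic growth,
letting `t → 1`, forces that mass to vanish.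
-/

open Filter Topology

section ChiSquare

variable {α : Type*} [MeasurableSpace α] {μ : Measure α}

/-- Since `p x / 0 = 0`, the mass of `p` on `{q = 0}` is invisible to `chiSq p q μ`. -/
noncomputable def chiSq (p q : α → ℝ) (μ : Measure α) : ℝ :=
  ∫ x, (p x / q x - 1) ^ 2 * q x ∂μ

lemma chiSq_nonneg {p q : α → ℝ} (hq : ∀ x, 0 ≤ q x) : 0 ≤ chiSq p q μ :=
  integral_nonneg fun x => mul_nonneg (sq_nonneg _) (hq x)

lemma chiSq_integrand_mix_le {a b t : ℝ} (ha : 0 ≤ a) (hb : 0 ≤ b) (ht0 : 0 ≤ t) (ht1 : t < 1) :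
    (a / ((1 - t) * a + t * b) - 1) ^ 2 * ((1 - t) * a + t * b)
      ≤ a / (1 - t) + ((1 - t) * a + t * b) := by
  set c := (1 - t) * a + t * b
  have hc : (1 - t) * a ≤ c := le_add_of_nonneg_right (mul_nonneg ht0 hb)
  rcases (hc.trans' (mul_nonneg (by linarith) ha)).eq_or_lt with hc0 | hc0
  · rw [← hc0, mul_zero, add_zero]
    exact div_nonneg ha (by linarith)
  · have hac : a / c ≤ 1 / (1 - t) := by
      rw [div_le_div_iff₀ hc0 (by linarith)]; linarith
    have hexpand : (a / c - 1) ^ 2 * c = a * (a / c) - 2 * a + c := by field_simp; ring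
    have hbound := mul_le_mul_of_nonneg_left hac ha
    rw [mul_one_div] at hbound
    linarith

lemma chiSq_integrand_mix_of_eq_zero {a t : ℝ} (ht1 : t < 1) :
    (a / ((1 - t) * a + t * 0) - 1) ^ 2 * ((1 - t) * a + t * 0) = t ^ 2 / (1 - t) * a := by
  rcases eq_or_ne a 0 with rfl | ha
  · simp
  · have : 1 - t ≠ 0 := by linarith
    field_simp
    ring

end ChiSquare

section Mixture

variable {α : Type*} {p q : α → ℝ} {t : ℝ}

lemma mix_nonneg (hp0 : ∀ x, 0 ≤ p x) (hq0 : ∀ x, 0 ≤ q x) (ht0 : 0 ≤ t) (ht1 : t ≤ 1)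
    (x : α) : 0 ≤ ((1 - t) • p + t • q) x :=
  add_nonneg (mul_nonneg (sub_nonneg.2 ht1) (hp0 x)) (mul_nonneg ht0 (hq0 x))

variable [MeasurableSpace α] {μ : Measure α}

lemma integrable_chiSq_integrand_mix (hp : Measurable p) (hq : Measurable q)
    (hp0 : ∀ x, 0 ≤ p x) (hq0 : ∀ x, 0 ≤ q x) (hpi : Integrable p μ) (hqi : Integrable q μ)
    (ht0 : 0 ≤ t) (ht1 : t < 1) :
    Integrable (fun x => (p x / ((1 - t) • p + t • q) x - 1) ^ 2 * ((1 - t) • p + t • q) x) μ := by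
  have hr : Integrable ((1 - t) • p + t • q) μ := (hpi.smul _).add (hqi.smul _)
  refine Integrable.mono' ((hpi.div_const (1 - t)).add hr) (by fun_prop) (ae_of_all _ fun x => ?_)
  rw [Real.norm_of_nonneg (mul_nonneg (sq_nonneg _) (mix_nonneg hp0 hq0 ht0 ht1.le x))]
  exact chiSq_integrand_mix_le (hp0 x) (hq0 x) ht0 ht1

lemma setIntegral_eq_zero_le_chiSq_mix (hp : Measurable p) (hq : Measurable q)
    (hp0 : ∀ x, 0 ≤ p x) (hq0 : ∀ x, 0 ≤ q x) (hpi : Integrable p μ) (hqi : Integrable q μ)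
    (ht0 : 0 ≤ t) (ht1 : t < 1) :
    t ^ 2 / (1 - t) * ∫ x in {x | q x = 0}, p x ∂μ ≤ chiSq p ((1 - t) • p + t • q) μ := by
  have hN : MeasurableSet {x | q x = 0} := hq (measurableSet_singleton 0)
  rw [← integral_const_mul, ← integral_indicator hN]
  refine integral_mono ((hpi.const_mul _).indicator hN)
    (integrable_chiSq_integrand_mix hp hq hp0 hq0 hpi hqi ht0 ht1) fun x => ?_
  by_cases hx : x ∈ {x | q x = 0}
  · rw [indicator_of_mem hx, ← chiSq_integrand_mix_of_eq_zero ht1]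
    simp only [Pi.add_apply, Pi.smul_apply, smul_eq_mul, hx.out, le_refl]
  · rw [indicator_of_notMem hx]
    exact mul_nonneg (sq_nonneg _) (mix_nonneg hp0 hq0 ht0 ht1.le x)

end Mixture

lemma nonpos_of_forall_mul_sq_le_one_sub_mul {a b : ℝ}
    (h : ∀ t ∈ Ioo (0 : ℝ) 1, a * t ^ 2 ≤ (1 - t) * b) : a ≤ 0 := by
  have hlim : Tendsto (fun t : ℝ => a * t ^ 2 - (1 - t) * b) (𝓝[<] 1)
      (𝓝 (a * 1 ^ 2 - (1 - 1) * b)) :=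
    (Continuous.tendsto (by fun_prop) 1).mono_left nhdsWithin_le_nhds
  have hle := le_of_tendsto hlim
    (eventually_of_mem (Ioo_mem_nhdsLT one_pos) fun t ht => sub_nonpos.2 (h t ht))
  simpa using hle

section Integrals

variable {α : Type*} [MeasurableSpace α] {μ : Measure α}

lemma ae_imp_eq_zero_of_setIntegral_eq_zero {p q : α → ℝ} (hp0 : ∀ x, 0 ≤ p x)
    (hpi : Integrable p μ) (hq : Measurable q) (h : ∫ x in {x | q x = 0}, p x ∂μ = 0) :
    ∀ᵐ x ∂μ, q x = 0 → p x = 0 := by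
  have hN : MeasurableSet {x | q x = 0} := hq (measurableSet_singleton 0)
  rw [setIntegral_eq_zero_iff_of_nonneg_ae (ae_of_all _ hp0) hpi.integrableOn,
    EventuallyEq, ae_restrict_iff' hN] at h
  exact h

lemma integral_mul_ratio_sub_one_mul {f p q : α → ℝ} (hfp : Integrable (fun x => f x * p x) μ)
    (hfq : Integrable (fun x => f x * q x) μ) (hpq : ∀ᵐ x ∂μ, q x = 0 → p x = 0) :
    ∫ x, f x * (p x / q x - 1) * q x ∂μ = (∫ x, f x * p x ∂μ) - ∫ x, f x * q x ∂μ := by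
  rw [← integral_sub hfp hfq]
  refine integral_congr_ae ?_
  filter_upwards [hpq] with x hx
  by_cases hqx : q x = 0
  · simp [hqx, hx hqx]
  · field_simp

lemma neg_integral_mul_mul_le {f u w : α → ℝ} (hw : ∀ x, 0 ≤ w x) {lam : ℝ} (hlam : 0 < lam)
    (hf : Integrable (fun x => f x ^ 2 * w x) μ) (hu : Integrable (fun x => u x ^ 2 * w x) μ) :
    -∫ x, f x * u x * w x ∂μ
      ≤ 1 / (2 * lam) * (∫ x, f x ^ 2 * w x ∂μ) + lam / 2 * ∫ x, u x ^ 2 * w x ∂μ := by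
  rw [← integral_const_mul, ← integral_const_mul, ← integral_add (hf.const_mul _) (hu.const_mul _),
    ← integral_neg]
  by_cases hfu : Integrable (fun x => f x * u x * w x) μ
  · refine integral_mono hfu.neg ((hf.const_mul _).add (hu.const_mul _)) fun x => ?_
    have hsq : 0 ≤ (f x + lam * u x) ^ 2 * w x / (2 * lam) := by have := hw x; positivity
    have hid : (f x + lam * u x) ^ 2 * w x / (2 * lam)
        = 1 / (2 * lam) * (f x ^ 2 * w x) + lam / 2 * (u x ^ 2 * w x) - -(f x * u x * w x) := by
      field_simp; ring
    linarith
  · rw [integral_undef (by simpa using hfu)]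
    exact integral_nonneg fun x => by have := hw x; positivity

end Integrals

section ProbDensity

variable {d : ℕ} {p q : (Fin d → ℝ) → ℝ}

lemma IsProbDensity.integrable (hp : IsProbDensity p) : Integrable p :=
  Integrable.of_integral_ne_zero (by rw [hp.2.2]; exact one_ne_zero)

lemma IsProbDensity.mix (hp : IsProbDensity p) (hq : IsProbDensity q) {t : ℝ} (ht0 : 0 ≤ t)
    (ht1 : t ≤ 1) : IsProbDensity ((1 - t) • p + t • q) := by
  refine ⟨(hp.1.const_smul _).add (hq.1.const_smul _), mix_nonneg hp.2.1 hq.2.1 ht0 ht1, ?_⟩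
  simp only [Pi.add_apply, Pi.smul_apply, smul_eq_mul]
  rw [integral_add (hp.integrable.const_mul _) (hq.integrable.const_mul _), integral_const_mul,
    integral_const_mul, hp.2.2, hq.2.2]
  ring

/-- By normalization the two convexity inequalities at the mixture, weighted by `1 - t` and `t`,
have right-hand sides summing to zero, so one of them is nonpositive. -/
lemma map_mix_le_max {G : ((Fin d → ℝ) → ℝ) → ℝ} {DG : ((Fin d → ℝ) → ℝ) → (Fin d → ℝ) → ℝ}
    (hnorm : ∀ p, IsProbDensity p → ∫ x, DG p x * p x = 0)
    (hconv : ∀ p q, IsProbDensity p → IsProbDensity q →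
      G p - G q ≤ (∫ x, DG p x * p x) - ∫ x, DG p x * q x)
    (hp : IsProbDensity p) (hq : IsProbDensity q) {t : ℝ} (ht0 : 0 ≤ t) (ht1 : t ≤ 1) :
    G ((1 - t) • p + t • q) ≤ max (G p) (G q) := by
  set r := (1 - t) • p + t • q
  have hr : IsProbDensity r := hp.mix hq ht0 ht1
  have hrp := hconv r p hr hp
  have hrq := hconv r q hr hq
  rw [hnorm r hr, zero_sub] at hrp hrq
  by_cases hA : Integrable (fun x => DG r x * p x)
  · by_cases hB : Integrable (fun x => DG r x * q x)
    · have hsum : (1 - t) * (∫ x, DG r x * p x) + t * ∫ x, DG r x * q x = 0 := by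
        rw [← integral_const_mul, ← integral_const_mul,
          ← integral_add (hA.const_mul _) (hB.const_mul _), ← hnorm r hr]
        congr 1 with x
        simp only [r, Pi.add_apply, Pi.smul_apply, smul_eq_mul]
        ring
      set A := ∫ x, DG r x * p x
      set B := ∫ x, DG r x * q x
      have hAB : 0 ≤ max A B := by
        by_contra! hneg
        nlinarith [mul_le_mul_of_nonneg_left (le_max_left A B) (sub_nonneg.2 ht1),
          mul_le_mul_of_nonneg_left (le_max_right A B) ht0]
      rcases le_max_iff.1 hAB with hA0 | hB0
      · exact le_max_of_le_left (by linarith)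
      · exact le_max_of_le_right (by linarith)
    · rw [integral_undef hB] at hrq
      exact le_max_of_le_right (by linarith)
  · rw [integral_undef hA] at hrp
    exact le_max_of_le_left (by linarith)

end ProbDensity

lemma ae_imp_eq_zero_of_chiSq_growth {d : ℕ} {G : ((Fin d → ℝ) → ℝ) → ℝ}
    {DG : ((Fin d → ℝ) → ℝ) → (Fin d → ℝ) → ℝ}
    (hnorm : ∀ p, IsProbDensity p → ∫ x, DG p x * p x = 0)
    (hconv : ∀ p q, IsProbDensity p → IsProbDensity q →
      G p - G q ≤ (∫ x, DG p x * p x) - ∫ x, DG p x * q x)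
    {mstar m : (Fin d → ℝ) → ℝ} (hmstar : IsProbDensity mstar) (hm : IsProbDensity m)
    {lam : ℝ} (hlam : 0 < lam)
    (hQG : ∀ q, IsProbDensity q → lam * chiSq mstar q volume ≤ G q - G mstar) :
    ∀ᵐ x, m x = 0 → mstar x = 0 := by
  set s := ∫ x in {x | m x = 0}, mstar x
  have hΔ : G mstar ≤ G m := by
    linarith [(mul_nonneg hlam.le (chiSq_nonneg (μ := volume) (p := mstar) hm.2.1)).trans
      (hQG m hm)]
  have hs : lam * s ≤ 0 := nonpos_of_forall_mul_sq_le_one_sub_mul fun t ht => by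
    have hmix := setIntegral_eq_zero_le_chiSq_mix hmstar.1 hm.1 hmstar.2.1 hm.2.1
      hmstar.integrable hm.integrable ht.1.le ht.2
    have hgrowth := hQG _ (hmstar.mix hm ht.1.le ht.2.le)
    have hmax := map_mix_le_max hnorm hconv hmstar hm ht.1.le ht.2.le
    rw [max_eq_right hΔ] at hmax
    have hlow : lam * (t ^ 2 / (1 - t) * s) ≤ G m - G mstar := by
      linarith [mul_le_mul_of_nonneg_left hmix hlam.le]
    have h1t : 0 < 1 - t := sub_pos.2 ht.2
    calc lam * s * t ^ 2 = (1 - t) * (lam * (t ^ 2 / (1 - t) * s)) := by field_simp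
      _ ≤ (1 - t) * (G m - G mstar) := mul_le_mul_of_nonneg_left hlow h1t.le
  have hs0 : 0 ≤ s :=
    setIntegral_nonneg (hm.1 (measurableSet_singleton 0)) fun x _ => hmstar.2.1 x
  exact ae_imp_eq_zero_of_setIntegral_eq_zero hmstar.2.1 hmstar.integrable hm.1
    (le_antisymm (nonpos_of_mul_nonpos_right hs hlam) hs0)

theorem stmt_5_general {d : ℕ} (G : ((Fin d → ℝ) → ℝ) → ℝ)
    (DG : ((Fin d → ℝ) → ℝ) → (Fin d → ℝ) → ℝ)
    (lam : ℝ) (hlam : 0 < lam)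
    (hnorm : ∀ p, IsProbDensity p → ∫ x, DG p x * p x = 0)
    (hconv : ∀ p q, IsProbDensity p → IsProbDensity q →
      G p - G q ≤ (∫ x, DG p x * p x) - ∫ x, DG p x * q x)
    (mstar : (Fin d → ℝ) → ℝ) (hmstar : IsProbDensity mstar)
    (hQG : ∀ q, IsProbDensity q →
      G q - G mstar ≥ lam * ∫ x, (mstar x / q x - 1) ^ 2 * q x)
    (m : (Fin d → ℝ) → ℝ) (hm : IsProbDensity m)
    (hL2 : Integrable (fun x => (DG m x) ^ 2 * m x))
    (hchi : Integrable (fun x => (mstar x / m x - 1) ^ 2 * m x))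
    (hIDm : Integrable (fun x => DG m x * m x))
    (hIDmstar : Integrable (fun x => DG m x * mstar x)) :
    G m - G mstar ≤ (1 / lam) * ∫ x, (DG m x) ^ 2 * m x := by
  have hac := ae_imp_eq_zero_of_chiSq_growth hnorm hconv hmstar hm hlam hQG
  have hgap : G m - G mstar ≤ -∫ x, DG m x * (mstar x / m x - 1) * m x := by
    rw [integral_mul_ratio_sub_one_mul hIDmstar hIDm hac]
    linarith [hconv m mstar hm hmstar, hnorm m hm]
  have hamgm := neg_integral_mul_mul_le hm.2.1 hlam hL2 hchi
  have hgrowth := hQG m hm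
  have hlam' : 1 / lam = 2 * (1 / (2 * lam)) := by field_simp
  rw [hlam']
  linarith

/-- flat Polyak–Łojasiewicz inequality from χ² quadratic growth:
G(m) − G(m*) ≤ (1/λ)·‖δG/δm(m,·)‖²_{L²(m)}. -/
theorem stmt_5 {d : ℕ} (G : ((Fin d → ℝ) → ℝ) → ℝ)
    (DG : ((Fin d → ℝ) → ℝ) → (Fin d → ℝ) → ℝ)
    (lam : ℝ) (hlam : 0 < lam)
    (hnorm : ∀ p, IsProbDensity p → ∫ x, DG p x * p x = 0)
    (hconv : ∀ p q, IsProbDensity p → IsProbDensity q →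
      G p - G q ≤ (∫ x, DG p x * p x) - ∫ x, DG p x * q x)
    (mstar : (Fin d → ℝ) → ℝ) (hmstar : IsProbDensity mstar)
    (hmin : ∀ q, IsProbDensity q → G mstar ≤ G q)
    (hQG : ∀ q, IsProbDensity q →
      G q - G mstar ≥ lam * ∫ x, (mstar x / q x - 1) ^ 2 * q x)
    (m : (Fin d → ℝ) → ℝ) (hm : IsProbDensity m)
    (hL2 : Integrable (fun x => (DG m x) ^ 2 * m x))
    (hchi : Integrable (fun x => (mstar x / m x - 1) ^ 2 * m x))
    (hIDm : Integrable (fun x => DG m x * m x))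
    (hIDmstar : Integrable (fun x => DG m x * mstar x)) :
    G m - G mstar ≤ (1 / lam) * ∫ x, (DG m x) ^ 2 * m x :=
  stmt_5_general G DG lam hlam hnorm hconv mstar hmstar hQG m hm hL2 hchi hIDm hIDmstar
end

section
/- Let m, m* be absolutely continuous probability measures and suppose r ≤ m(x)/m*(x) ≤ R pointwise with 0 < r ≤ R. Then χ²(m*|m) ≤ (2R/r)·KL(m|m*). -/
/-!
Write `t = m / m*` and `φ(t) = t log t + 1 - t` (Mathlib's `klFun`). Since `∫ m = ∫ m* = 1`,
`KL(m|m*) = ∫ φ(t) m*` and `χ²(m*|m) = ∫ (t - 1)² / t · m*`, so it suffices to prove the pointwise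
bound `(t - 1)² / t ≤ (2R/r) φ(t)` on `[r, R]`. This follows from `(t - 1)² ≤ 2 max(t, 1) φ(t)`
for `t > 0`, together with `r ≤ t` and `1 ≤ R` (integrate `m ≤ R m*`).
-/

open MeasureTheory Set Real InformationTheory

lemma sq_sub_one_le_two_mul_klFun {t : ℝ} (ht₀ : 0 < t) (ht₁ : t ≤ 1) :
    (t - 1) ^ 2 ≤ 2 * klFun t := by
  -- `sinh u ≤ u` for `u = log t ≤ 0`, and `sinh (log t) = (t - t⁻¹) / 2`
  have h := sinh_le_self_iff.2 (log_nonpos ht₀.le ht₁)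
  rw [sinh_log ht₀, div_le_iff₀ two_pos] at h
  have h' : t ^ 2 - 1 ≤ 2 * t * log t := by
    have := mul_le_mul_of_nonneg_left h ht₀.le
    rw [mul_sub, mul_inv_cancel₀ ht₀.ne'] at this
    linarith
  rw [klFun_apply]
  nlinarith

lemma sq_sub_one_le_two_mul_mul_klFun {t : ℝ} (ht : 1 ≤ t) :
    (t - 1) ^ 2 ≤ 2 * t * klFun t := by
  let G : ℝ → ℝ := fun u ↦ 2 * u * klFun u - (u - 1) ^ 2
  have hG : ∀ u, u ≠ 0 → HasDerivAt G (4 * klFun u) u := fun u hu ↦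
    ((((hasDerivAt_id u).const_mul 2).mul (hasDerivAt_klFun hu)).sub
      (((hasDerivAt_id u).sub_const 1).pow 2)).congr_deriv (by simp only [klFun_apply, id]; ring)
  have hG_mono : MonotoneOn G (Ici 1) := by
    refine monotoneOn_of_hasDerivWithinAt_nonneg (convex_Ici 1) (f' := fun u ↦ 4 * klFun u)
      (fun u hu ↦ ?_) (fun u hu ↦ ?_) (fun u hu ↦ ?_) <;>
      simp only [interior_Ici, mem_Ici, mem_Ioi] at hu
    · exact (hG u (by linarith)).continuousAt.continuousWithinAt
    · exact (hG u (by linarith)).hasDerivWithinAt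
    · have := klFun_nonneg (zero_le_one.trans hu.le)
      positivity
  have := hG_mono self_mem_Ici ht ht
  simp only [G, klFun_one] at this
  linarith

lemma inv_sub_one_sq_mul_le_klFun {r R t : ℝ} (hr : 0 < r) (hR : 1 ≤ R) (ht : t ∈ Icc r R) :
    (t⁻¹ - 1) ^ 2 * t ≤ 2 * R / r * klFun t := by
  have ht₀ : 0 < t := hr.trans_le ht.1
  have hK := klFun_nonneg ht₀.le
  have h_eq : (t⁻¹ - 1) ^ 2 * t = (t - 1) ^ 2 / t := by field_simp; ring
  rw [h_eq, div_le_iff₀ ht₀]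
  rcases le_total t 1 with ht₁ | ht₁
  · have hRt : 1 ≤ R / r * t := by
      rw [div_mul_eq_mul_div, one_le_div hr]
      nlinarith [ht.1]
    calc (t - 1) ^ 2 ≤ 2 * klFun t := sq_sub_one_le_two_mul_klFun ht₀ ht₁
      _ ≤ 2 * klFun t * (R / r * t) := le_mul_of_one_le_right (by positivity) hRt
      _ = 2 * R / r * klFun t * t := by ring
  · have hRr : 1 ≤ R / r := (one_le_div hr).2 (ht.1.trans ht.2)
    calc (t - 1) ^ 2 ≤ 2 * t * klFun t := sq_sub_one_le_two_mul_mul_klFun ht₁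
      _ ≤ 2 * t * klFun t * (R / r) := le_mul_of_one_le_right (by positivity) hRr
      _ = 2 * R / r * klFun t * t := by ring

section

variable {α : Type*} [MeasurableSpace α] {μ : Measure α}

lemma integrable_comp_mul_of_mem_Icc {φ : ℝ → ℝ} (hφ : Continuous φ) {t g : α → ℝ} {a b : ℝ}
    (ht : AEStronglyMeasurable t μ) (ht_mem : ∀ x, t x ∈ Icc a b) (hg : Integrable g μ) :
    Integrable (fun x ↦ φ (t x) * g x) μ := by
  obtain ⟨C, hC⟩ := isCompact_Icc.exists_bound_of_continuousOn hφ.continuousOn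
  exact hg.bdd_mul (hφ.comp_aestronglyMeasurable ht) (ae_of_all _ fun x ↦ hC _ (ht_mem x))

lemma integral_klFun_div_mul_eq {f g : α → ℝ} (hg₀ : ∀ x, g x ≠ 0) (hf : Integrable f μ)
    (hg : Integrable g μ) (hK : Integrable (fun x ↦ klFun (f x / g x) * g x) μ)
    (hfg : ∫ x, f x ∂μ = ∫ x, g x ∂μ) :
    ∫ x, klFun (f x / g x) * g x ∂μ = ∫ x, log (f x / g x) * f x ∂μ := by
  have h_pt : ∀ x, log (f x / g x) * f x = klFun (f x / g x) * g x - (g x - f x) := fun x ↦ by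
    rw [klFun_apply]
    field_simp [hg₀ x]
    ring
  simp_rw [h_pt]
  rw [integral_sub (g := fun x ↦ g x - f x) hK (hg.sub hf), integral_sub hg hf, hfg,
    sub_self, sub_zero]

end

theorem stmt_15_general {d : ℕ} (m mstar : (Fin d → ℝ) → ℝ) (r R : ℝ)
    (hr : 0 < r)
    (hm : Measurable m) (hmstar : Measurable mstar)
    (hmstar0 : ∀ x, 0 ≤ mstar x)
    (hm1 : ∫ x, m x = 1) (hmstar1 : ∫ x, mstar x = 1)
    (hratio : ∀ x, r ≤ m x / mstar x ∧ m x / mstar x ≤ R) :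
    ∫ x, (mstar x / m x - 1) ^ 2 * m x
      ≤ (2 * R / r) * ∫ x, Real.log (m x / mstar x) * m x := by
  have hmstar_pos : ∀ x, 0 < mstar x := fun x ↦ (hmstar0 x).lt_of_ne fun h ↦ by
    have := (hratio x).1
    rw [← h, div_zero] at this
    linarith
  have hm_int : Integrable m := Integrable.of_integral_ne_zero (by rw [hm1]; exact one_ne_zero)
  have hmstar_int : Integrable mstar :=
    Integrable.of_integral_ne_zero (by rw [hmstar1]; exact one_ne_zero)
  have hR : 1 ≤ R := by
    have := integral_mono hm_int (hmstar_int.const_mul R)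
      fun x ↦ (div_le_iff₀ (hmstar_pos x)).1 (hratio x).2
    rwa [hm1, integral_const_mul, hmstar1, mul_one] at this
  have hK : Integrable (fun x ↦ klFun (m x / mstar x) * mstar x) :=
    integrable_comp_mul_of_mem_Icc continuous_klFun (hm.div hmstar).aestronglyMeasurable hratio
      hmstar_int
  calc ∫ x, (mstar x / m x - 1) ^ 2 * m x
      = ∫ x, ((m x / mstar x)⁻¹ - 1) ^ 2 * (m x / mstar x) * mstar x := by
        refine integral_congr_ae (ae_of_all _ fun x ↦ ?_)
        beta_reduce
        rw [inv_div, mul_assoc, div_mul_cancel₀ _ (hmstar_pos x).ne']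
    _ ≤ ∫ x, 2 * R / r * (klFun (m x / mstar x) * mstar x) := by
        refine integral_mono_of_nonneg (ae_of_all _ fun x ↦ ?_) (hK.const_mul _)
          (ae_of_all _ fun x ↦ ?_)
        · have := hr.trans_le (hratio x).1
          have := hmstar0 x
          positivity
        · beta_reduce
          rw [← mul_assoc]
          exact mul_le_mul_of_nonneg_right (inv_sub_one_sq_mul_le_klFun hr hR (hratio x))
            (hmstar0 x)
    _ = 2 * R / r * ∫ x, log (m x / mstar x) * m x := by
        rw [integral_const_mul, integral_klFun_div_mul_eq (fun x ↦ (hmstar_pos x).ne') hm_int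
          hmstar_int hK (by rw [hm1, hmstar1])]

/-- χ²(m*|m) ≤ (2R/r)·KL(m|m*) under density ratio bounds. -/
theorem stmt_15 {d : ℕ} (m mstar : (Fin d → ℝ) → ℝ) (r R : ℝ)
    (hr : 0 < r) (hrR : r ≤ R)
    (hm : Measurable m) (hmstar : Measurable mstar)
    (hm0 : ∀ x, 0 ≤ m x) (hmstar0 : ∀ x, 0 ≤ mstar x)
    (hm1 : ∫ x, m x = 1) (hmstar1 : ∫ x, mstar x = 1)
    (hratio : ∀ x, r ≤ m x / mstar x ∧ m x / mstar x ≤ R) :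
    ∫ x, (mstar x / m x - 1) ^ 2 * m x
      ≤ (2 * R / r) * ∫ x, Real.log (m x / mstar x) * m x :=
  stmt_15_general m mstar r R hr hm hmstar hmstar0 hm1 hmstar1 hratio
end
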